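/- arXiv:2403.17557 — 11 statements merged into one kernel-verified Lean document; each statement's English description precedes it below -/
import Mathlib

section
/- Let 0 ≤ m < M and let f : [0,∞) → ℝ be a superquadratic function. Define β(t) = ((t−m)/(M−m))·f(M−t) + ((M−t)/(M−m))·f(t−m) for t ∈ [m,M]. Then for all x, y ∈ [m,M] and every λ ∈ [0,1], f(m + M − (λx + (1−λ)y)) + 2(λβ(x) + (1−λ)β(y)) ≤ f(m) + f(M) − (λf(x) + (1−λ)f(y)) − (λ·f((1−λ)|x−y|) + (1−λ)·f(λ|x−y|)). -/
/-!
A superquadratic function satisfies a Jensen-type inequality with the defect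
`λ f((1-λ)|a-b|) + (1-λ) f(λ|a-b|)`: average the defining inequalities at `a` and `b` around
the barycentre, where the linear terms cancel. Writing `t ∈ [m, M]` and its reflection
`m + M - t` as the two convex combinations of `m` and `M` with swapped weights and adding the
two Jensen inequalities gives `f(m + M - t) + 2β(t) ≤ f m + f M - f t`. The theorem is the
`λ`-average of this at `x` and `y`, combined with Jensen at `m + M - x` and `m + M - y`.
-/

/-- A function `f : [0,∞) → ℝ` is superquadratic if for every `x ≥ 0` there exists a
constant `C ∈ ℝ` such that `f y ≥ f x + C * (y - x) + f |y - x|` for all `y ≥ 0`. -/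
def Superquadratic (f : ℝ → ℝ) : Prop :=
  ∀ x : ℝ, 0 ≤ x → ∃ C : ℝ, ∀ y : ℝ, 0 ≤ y → f x + C * (y - x) + f (|y - x|) ≤ f y

namespace Superquadratic

variable {f : ℝ → ℝ}

theorem jensen (hf : Superquadratic f) {a b l : ℝ} (ha : 0 ≤ a) (hb : 0 ≤ b)
    (hl0 : 0 ≤ l) (hl1 : l ≤ 1) :
    f (l * a + (1 - l) * b) + l * f ((1 - l) * |a - b|) + (1 - l) * f (l * |a - b|) ≤
      l * f a + (1 - l) * f b := by
  set c := l * a + (1 - l) * b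
  obtain ⟨C, hC⟩ := hf c (by positivity)
  have hdist_a : |a - c| = (1 - l) * |a - b| := by
    rw [show a - c = (1 - l) * (a - b) by ring, abs_mul, abs_of_nonneg (by linarith)]
  have hdist_b : |b - c| = l * |a - b| := by
    rw [show b - c = l * (b - a) by ring, abs_mul, abs_of_nonneg hl0, abs_sub_comm]
  have ha' := hC a ha
  have hb' := hC b hb
  rw [hdist_a] at ha'
  rw [hdist_b] at hb'
  nlinarith [mul_le_mul_of_nonneg_left ha' hl0, mul_le_mul_of_nonneg_left hb' (sub_nonneg.2 hl1)]

theorem jensen_add_jensen_swap (hf : Superquadratic f) {a b l : ℝ} (ha : 0 ≤ a) (hb : 0 ≤ b)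
    (hl0 : 0 ≤ l) (hl1 : l ≤ 1) :
    f (l * a + (1 - l) * b) + f ((1 - l) * a + l * b) +
        2 * (l * f ((1 - l) * |a - b|) + (1 - l) * f (l * |a - b|)) ≤ f a + f b := by
  have h := hf.jensen ha hb hl0 hl1
  have hswap := hf.jensen ha hb (sub_nonneg.2 hl1) (sub_le_self 1 hl0)
  rw [sub_sub_cancel] at hswap
  linarith

theorem apply_reflect_add_two_mul_le (hf : Superquadratic f) {m M t : ℝ} (hm : 0 ≤ m)
    (hmM : m < M) (ht : t ∈ Set.Icc m M) :
    f (m + M - t) + 2 * ((t - m) / (M - m) * f (M - t) + (M - t) / (M - m) * f (t - m)) ≤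
      f m + f M - f t := by
  obtain ⟨htm, htM⟩ := ht
  have hMm : 0 < M - m := sub_pos.2 hmM
  set p := (M - t) / (M - m)
  have hp_mul : p * (M - m) = M - t := div_mul_cancel₀ _ hMm.ne'
  have hq : (t - m) / (M - m) = 1 - p := by
    rw [div_eq_iff hMm.ne']; linarith
  have hp0 : 0 ≤ p := div_nonneg (by linarith) hMm.le
  have hp1 : p ≤ 1 := (div_le_one hMm).2 (by linarith)
  have h := hf.jensen_add_jensen_swap hm (hm.trans hmM.le) hp0 hp1
  rw [abs_sub_comm, abs_of_pos hMm, hp_mul, show (1 - p) * (M - m) = t - m by linarith,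
    show p * m + (1 - p) * M = t by linarith,
    show (1 - p) * m + p * M = m + M - t by linarith] at h
  rw [hq]
  linarith

end Superquadratic

theorem mercer_lemma_superquadratic
    (m M : ℝ) (hm : 0 ≤ m) (hmM : m < M)
    (f : ℝ → ℝ) (hf : Superquadratic f)
    (β : ℝ → ℝ)
    (hβ : ∀ t ∈ Set.Icc m M,
      β t = (t - m) / (M - m) * f (M - t) + (M - t) / (M - m) * f (t - m))
    (x y : ℝ) (hx : x ∈ Set.Icc m M) (hy : y ∈ Set.Icc m M)
    (lam : ℝ) (hlam : lam ∈ Set.Icc (0 : ℝ) 1) :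
    f (m + M - (lam * x + (1 - lam) * y)) + 2 * (lam * β x + (1 - lam) * β y) ≤
      f m + f M - (lam * f x + (1 - lam) * f y) -
        (lam * f ((1 - lam) * |x - y|) + (1 - lam) * f (lam * |x - y|)) := by
  obtain ⟨hl0, hl1⟩ := hlam
  have hreflect_x := hf.apply_reflect_add_two_mul_le hm hmM hx
  have hreflect_y := hf.apply_reflect_add_two_mul_le hm hmM hy
  have hJ := hf.jensen (a := m + M - x) (b := m + M - y) (by linarith [hx.2]) (by linarith [hy.2])
    hl0 hl1
  rw [show lam * (m + M - x) + (1 - lam) * (m + M - y) = m + M - (lam * x + (1 - lam) * y) by ring,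
    show m + M - x - (m + M - y) = y - x by ring, abs_sub_comm] at hJ
  rw [hβ x hx, hβ y hy]
  nlinarith [mul_le_mul_of_nonneg_left hreflect_x hl0,
    mul_le_mul_of_nonneg_left hreflect_y (sub_nonneg.2 hl1)]
end

section
/- Let 0 ≤ m < M and let f : [0,∞) → ℝ be a superquadratic function, and let β(t) = ((t−m)/(M−m))·f(M−t) + ((M−t)/(M−m))·f(t−m). Then for all x, y ∈ [m,M] with x < y: f(m + M − (x+y)/2) + 2∫₀^{1/2} f(u·|x−y|) du ≤ (1/(y−x))·∫ₓ^y f(m + M − u) du ≤ f(m) + f(M) − (f(x)+f(y))/2 − (β(x)+β(y)) − 2∫₀¹ (1−u)·f(u·|x−y|) du. -/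
open Set intervalIntegral

theorem integral_div_sub_eq_integral_comp_mul_add (f : ℝ → ℝ) {a b : ℝ} (hab : a ≠ b) :
    (∫ s in a..b, f s) / (b - a) = ∫ u in (0 : ℝ)..1, f ((b - a) * u + a) := by
  have h := smul_integral_comp_mul_add (a := 0) (b := 1) f (b - a) a
  rw [mul_zero, zero_add, mul_one, sub_add_cancel, smul_eq_mul] at h
  rw [← h, mul_div_cancel_left₀ _ (sub_ne_zero.2 hab.symm)]

theorem integral_comp_one_sub (g : ℝ → ℝ) :
    ∫ u in (0 : ℝ)..1, g (1 - u) = ∫ u in (0 : ℝ)..1, g u := by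
  simp [integral_comp_sub_left]

theorem integral_comp_abs_sub_half {g : ℝ → ℝ} (hg : Continuous g) {c : ℝ} (hc : 0 ≤ c) :
    ∫ u in (0 : ℝ)..c, g |u - c / 2| = 2 * ∫ u in (0 : ℝ)..c / 2, g u := by
  have hgc : Continuous fun u => g |u - c / 2| := by fun_prop
  have h_left : ∫ u in (0 : ℝ)..c / 2, g |u - c / 2| = ∫ u in (0 : ℝ)..c / 2, g u := by
    rw [integral_congr (g := fun u => g (c / 2 - u)), integral_comp_sub_left, sub_self, sub_zero]
    intro u hu
    rw [uIcc_of_le (by linarith)] at hu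
    simp only [abs_sub_comm u, abs_of_nonneg (sub_nonneg.2 hu.2)]
  have h_right : ∫ u in c / 2..c, g |u - c / 2| = ∫ u in (0 : ℝ)..c / 2, g u := by
    rw [integral_congr (g := fun u => g (u - c / 2)), integral_comp_sub_right, sub_self,
      sub_half]
    intro u hu
    rw [uIcc_of_le (by linarith)] at hu
    simp only [abs_of_nonneg (sub_nonneg.2 hu.1)]
  rw [← integral_add_adjacent_intervals (hgc.intervalIntegrable 0 (c / 2))
    (hgc.intervalIntegrable (c / 2) c), h_left, h_right, two_mul]

namespace Superquadratic

variable {f : ℝ → ℝ}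

theorem le_convex_comb (hf : Superquadratic f) {a b t : ℝ} (ha : 0 ≤ a) (hb : 0 ≤ b)
    (ht₀ : 0 ≤ t) (ht₁ : t ≤ 1) :
    f ((1 - t) * a + t * b) ≤
      (1 - t) * f a + t * f b - (1 - t) * f (t * |b - a|) - t * f ((1 - t) * |b - a|) := by
  obtain ⟨C, hC⟩ := hf ((1 - t) * a + t * b) (by positivity)
  have hCa := hC a ha
  have hCb := hC b hb
  rw [show a - ((1 - t) * a + t * b) = -(t * (b - a)) by ring, abs_neg, abs_mul,
    abs_of_nonneg ht₀] at hCa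
  rw [show b - ((1 - t) * a + t * b) = (1 - t) * (b - a) by ring, abs_mul,
    abs_of_nonneg (sub_nonneg.2 ht₁)] at hCb
  nlinarith [mul_le_mul_of_nonneg_left hCa (sub_nonneg.2 ht₁), mul_le_mul_of_nonneg_left hCb ht₀]

theorem apply_add_apply_reflect_le (hf : Superquadratic f) {m M t : ℝ} (hm : 0 ≤ m) (hmM : m < M)
    (ht : t ∈ Icc m M) :
    f t + f (m + M - t) ≤
      f m + f M - 2 * ((t - m) / (M - m) * f (M - t) + (M - t) / (M - m) * f (t - m)) := by
  have hk : 0 < M - m := sub_pos.2 hmM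
  set w := (t - m) / (M - m)
  have hw₀ : 0 ≤ w := div_nonneg (sub_nonneg.2 ht.1) hk.le
  have hw₁ : w ≤ 1 := (div_le_one hk).2 (by linarith [ht.2])
  have h_len : w * (M - m) = t - m := div_mul_cancel₀ _ hk.ne'
  have h_len' : (1 - w) * (M - m) = M - t := by linear_combination -h_len
  have h_one_sub : 1 - w = (M - t) / (M - m) := by rw [eq_div_iff hk.ne', h_len']
  have h_up := hf.le_convex_comb hm (hm.trans hmM.le) hw₀ hw₁
  have h_down := hf.le_convex_comb (hm.trans hmM.le) hm hw₀ hw₁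
  rw [abs_of_pos hk, h_len, h_len',
    show (1 - w) * m + w * M = t by linear_combination h_len] at h_up
  rw [abs_sub_comm, abs_of_pos hk, h_len, h_len',
    show (1 - w) * M + w * m = m + M - t by linear_combination -h_len] at h_down
  rw [← h_one_sub]
  linear_combination h_up + h_down

theorem hermiteHadamard_left (hf : Superquadratic f) (hfc : Continuous f) {a b : ℝ}
    (ha : 0 ≤ a) (hab : a < b) :
    f ((a + b) / 2) + 2 * ∫ u in (0 : ℝ)..1 / 2, f (u * (b - a)) ≤
      (∫ s in a..b, f s) / (b - a) := by
  have hk : 0 < b - a := sub_pos.2 hab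
  obtain ⟨C, hC⟩ := hf ((a + b) / 2) (by linarith)
  have h_support : ∀ u ∈ Icc (0 : ℝ) 1,
      f ((a + b) / 2) + C * ((b - a) * (u - 1 / 2)) + f (|u - 1 / 2| * (b - a)) ≤
        f ((b - a) * u + a) := by
    intro u hu
    have h := hC ((b - a) * u + a) (by nlinarith [hu.1])
    rwa [show (b - a) * u + a - (a + b) / 2 = (b - a) * (u - 1 / 2) by ring, abs_mul,
      abs_of_pos hk, mul_comm (b - a) |_|] at h
  have h_linear : ∫ u in (0 : ℝ)..1, C * ((b - a) * (u - 1 / 2)) = 0 := by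
    simp [integral_const_mul]
  have h_abs := integral_comp_abs_sub_half (g := fun u => f (u * (b - a))) (by fun_prop) zero_le_one
  rw [integral_div_sub_eq_integral_comp_mul_add f hab.ne]
  calc f ((a + b) / 2) + 2 * ∫ u in (0 : ℝ)..1 / 2, f (u * (b - a))
      = ∫ u in (0 : ℝ)..1,
          (f ((a + b) / 2) + C * ((b - a) * (u - 1 / 2)) + f (|u - 1 / 2| * (b - a))) := by
        rw [integral_add (Continuous.intervalIntegrable (by fun_prop) _ _)
            (Continuous.intervalIntegrable (by fun_prop) _ _),
          integral_add intervalIntegrable_const (Continuous.intervalIntegrable (by fun_prop) _ _),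
          h_linear, h_abs]
        simp
    _ ≤ ∫ u in (0 : ℝ)..1, f ((b - a) * u + a) :=
        integral_mono_on zero_le_one (Continuous.intervalIntegrable (by fun_prop) _ _)
          (Continuous.intervalIntegrable (by fun_prop) _ _) h_support

theorem hermiteHadamard_right (hf : Superquadratic f) (hfc : Continuous f) {a b : ℝ}
    (ha : 0 ≤ a) (hab : a < b) :
    (∫ s in a..b, f s) / (b - a) ≤
      (f a + f b) / 2 - 2 * ∫ u in (0 : ℝ)..1, (1 - u) * f (u * (b - a)) := by
  have h_jensen : ∀ u ∈ Icc (0 : ℝ) 1, f ((b - a) * u + a) ≤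
      (1 - u) * f a + u * f b - (1 - u) * f (u * (b - a)) - u * f ((1 - u) * (b - a)) := by
    intro u hu
    have h := hf.le_convex_comb ha (ha.trans hab.le) hu.1 hu.2
    rwa [abs_of_pos (sub_pos.2 hab), show (1 - u) * a + u * b = (b - a) * u + a by ring] at h
  have h_flip : ∫ u in (0 : ℝ)..1, u * f ((1 - u) * (b - a)) =
      ∫ u in (0 : ℝ)..1, (1 - u) * f (u * (b - a)) := by
    simpa using integral_comp_one_sub (fun u => (1 - u) * f (u * (b - a)))
  have h_weight : ∫ u in (0 : ℝ)..1, (1 - u) = 1 / 2 := by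
    simp [integral_comp_one_sub (fun u => u)]
  rw [integral_div_sub_eq_integral_comp_mul_add f hab.ne]
  calc ∫ u in (0 : ℝ)..1, f ((b - a) * u + a)
      ≤ ∫ u in (0 : ℝ)..1,
          ((1 - u) * f a + u * f b - (1 - u) * f (u * (b - a)) - u * f ((1 - u) * (b - a))) :=
        integral_mono_on zero_le_one (Continuous.intervalIntegrable (by fun_prop) _ _)
          (Continuous.intervalIntegrable (by fun_prop) _ _) h_jensen
    _ = (f a + f b) / 2 - 2 * ∫ u in (0 : ℝ)..1, (1 - u) * f (u * (b - a)) := by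
        rw [integral_sub (Continuous.intervalIntegrable (by fun_prop) _ _)
            (Continuous.intervalIntegrable (by fun_prop) _ _),
          integral_sub (Continuous.intervalIntegrable (by fun_prop) _ _)
            (Continuous.intervalIntegrable (by fun_prop) _ _),
          integral_add (Continuous.intervalIntegrable (by fun_prop) _ _)
            (Continuous.intervalIntegrable (by fun_prop) _ _),
          integral_mul_const, integral_mul_const, h_flip, h_weight, integral_id]
        ring

end Superquadratic

theorem mercer_hermite_hadamard_superquadratic_first_general
    (m M : ℝ) (hm : 0 ≤ m)
    (f : ℝ → ℝ) (hf : Superquadratic f) (hf_cont : Continuous f)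
    (β : ℝ → ℝ)
    (hβ : ∀ t ∈ Set.Icc m M,
      β t = (t - m) / (M - m) * f (M - t) + (M - t) / (M - m) * f (t - m))
    (x y : ℝ) (hx : x ∈ Set.Icc m M) (hy : y ∈ Set.Icc m M) (hxy : x < y) :
    f (m + M - (x + y) / 2) + 2 * (∫ u in (0 : ℝ)..(1 / 2), f (u * |x - y|)) ≤
        (1 / (y - x)) * (∫ u in x..y, f (m + M - u)) ∧
      (1 / (y - x)) * (∫ u in x..y, f (m + M - u)) ≤
        f m + f M - (f x + f y) / 2 - (β x + β y) -
          2 * (∫ u in (0 : ℝ)..1, (1 - u) * f (u * |x - y|)) := by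
  have hmM : m < M := by linarith [hx.1, hy.2]
  have hwidth : (m + M - x) - (m + M - y) = |x - y| := by
    rw [abs_sub_comm, abs_of_pos (sub_pos.2 hxy)]; ring
  have hmean : 1 / (y - x) * ∫ u in x..y, f (m + M - u) =
      (∫ s in m + M - y..m + M - x, f s) / ((m + M - x) - (m + M - y)) := by
    rw [integral_comp_sub_left]; ring_nf
  have ha : 0 ≤ m + M - y := by linarith [hy.2]
  have hab : m + M - y < m + M - x := by linarith
  have hleft := hf.hermiteHadamard_left hf_cont ha hab
  have hright := hf.hermiteHadamard_right hf_cont ha hab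
  rw [hwidth] at hleft hright hmean
  have hmercer_x := hf.apply_add_apply_reflect_le hm hmM hx
  have hmercer_y := hf.apply_add_apply_reflect_le hm hmM hy
  rw [← hβ x hx] at hmercer_x
  rw [← hβ y hy] at hmercer_y
  rw [hmean, show m + M - (x + y) / 2 = (m + M - y + (m + M - x)) / 2 by ring]
  exact ⟨hleft, by linarith⟩

theorem mercer_hermite_hadamard_superquadratic_first
    (m M : ℝ) (hm : 0 ≤ m) (hmM : m < M)
    (f : ℝ → ℝ) (hf : Superquadratic f) (hf_cont : Continuous f)
    (β : ℝ → ℝ)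
    (hβ : ∀ t ∈ Set.Icc m M,
      β t = (t - m) / (M - m) * f (M - t) + (M - t) / (M - m) * f (t - m))
    (x y : ℝ) (hx : x ∈ Set.Icc m M) (hy : y ∈ Set.Icc m M) (hxy : x < y) :
    f (m + M - (x + y) / 2) + 2 * (∫ u in (0 : ℝ)..(1 / 2), f (u * |x - y|)) ≤
        (1 / (y - x)) * (∫ u in x..y, f (m + M - u)) ∧
      (1 / (y - x)) * (∫ u in x..y, f (m + M - u)) ≤
        f m + f M - (f x + f y) / 2 - (β x + β y) -
          2 * (∫ u in (0 : ℝ)..1, (1 - u) * f (u * |x - y|)) :=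
  mercer_hermite_hadamard_superquadratic_first_general m M hm f hf hf_cont β hβ x y hx hy hxy
end

section
/- Let 0 ≤ m < M and let f : [0,∞) → ℝ be a superquadratic function, and let β(t) = ((t−m)/(M−m))·f(M−t) + ((M−t)/(M−m))·f(t−m). Then for all x, y ∈ [m,M] with x < y: f(m + M − (x+y)/2) + 2∫₀^{1/2} f(u·|x−y|) du ≤ f(m) + f(M) − (1/(y−x))·∫ₓ^y (f(u) + 2β(u)) du ≤ f(m) + f(M) − f((x+y)/2) − (2/(y−x))·∫ₓ^y β(u) du − 2∫₀^{1/2} f(u·|x−y|) du. -/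
/-!
Integrating the support inequality `f c + C (t - c) + f |t - c| ≤ f t` of a superquadratic `f`
at the midpoint `c` of `[a, b]` gives the left Hermite–Hadamard bound
`f c + 2 ∫₀^{1/2} f (u (b - a)) du ≤ ⨍_a^b f`. Evaluating the support inequalities at `t` and at
`m + M - t` in the endpoints `m`, `M` gives Mercer's bound
`f (m + M - t) ≤ f m + f M - f t - 2 β t`. The first inequality is Hermite–Hadamard on the
reflected interval `[m + M - y, m + M - x]` followed by the integrated Mercer bound; the second is
Hermite–Hadamard on `[x, y]`.
-/

open intervalIntegral Set

section IntervalIntegrals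

variable {f : ℝ → ℝ}

theorem integral_comp_abs_sub_midpoint (hf : Continuous f) {a b : ℝ} (hab : a ≤ b) :
    ∫ t in a..b, f |t - (a + b) / 2| = 2 * ∫ s in (0 : ℝ)..(b - a) / 2, f s := by
  set c := (a + b) / 2 with hc
  have hac : a ≤ c := by rw [hc]; linarith
  have hcb : c ≤ b := by rw [hc]; linarith
  have h_left : ∫ t in a..c, f |t - c| = ∫ s in (0 : ℝ)..(b - a) / 2, f s := by
    have h_eq : EqOn (fun t => f |t - c|) (fun t => f (c - t)) (uIcc a c) := by
      intro t ht
      rw [uIcc_of_le hac] at ht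
      simp only [abs_of_nonpos (sub_nonpos.2 ht.2), neg_sub]
    rw [integral_congr h_eq, integral_comp_sub_left, sub_self]
    congr 1
    ring
  have h_right : ∫ t in c..b, f |t - c| = ∫ s in (0 : ℝ)..(b - a) / 2, f s := by
    have h_eq : EqOn (fun t => f |t - c|) (fun t => f (t - c)) (uIcc c b) := by
      intro t ht
      rw [uIcc_of_le hcb] at ht
      simp only [abs_of_nonneg (sub_nonneg.2 ht.1)]
    rw [integral_congr h_eq, integral_comp_sub_right, sub_self]
    congr 1
    ring
  have h_int : Continuous fun t => f |t - c| := by fun_prop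
  rw [← integral_add_adjacent_intervals (h_int.intervalIntegrable a c)
    (h_int.intervalIntegrable c b), h_left, h_right, two_mul]

theorem integral_zero_half_comp_mul (L : ℝ) (hL : L ≠ 0) :
    ∫ u in (0 : ℝ)..1 / 2, f (u * L) = L⁻¹ * ∫ s in (0 : ℝ)..L / 2, f s := by
  rw [integral_comp_mul_right f hL, zero_mul, one_div_mul_eq_div, smul_eq_mul]

end IntervalIntegrals

namespace Superquadratic

variable {f : ℝ → ℝ}

theorem two_point_jensen (hf : Superquadratic f) {a t b : ℝ} (ha : 0 ≤ a) (hat : a ≤ t)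
    (htb : t ≤ b) :
    (b - a) * f t + (b - t) * f (t - a) + (t - a) * f (b - t) ≤
      (b - t) * f a + (t - a) * f b := by
  obtain ⟨C, hC⟩ := hf t (ha.trans hat)
  have h_a := hC a ha
  have h_b := hC b (by linarith)
  -- with weights `b - t` and `t - a` the support slope `C` cancels
  rw [abs_sub_comm, abs_of_nonneg (sub_nonneg.2 hat)] at h_a
  rw [abs_of_nonneg (sub_nonneg.2 htb)] at h_b
  nlinarith [mul_le_mul_of_nonneg_left h_a (sub_nonneg.2 htb),
    mul_le_mul_of_nonneg_left h_b (sub_nonneg.2 hat)]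

theorem mercer {m M t : ℝ} (hf : Superquadratic f) (hm : 0 ≤ m) (hmM : m < M) (hmt : m ≤ t)
    (htM : t ≤ M) :
    f (m + M - t) ≤
      f m + f M - f t - 2 * ((t - m) / (M - m) * f (M - t) + (M - t) / (M - m) * f (t - m)) := by
  have h_t := hf.two_point_jensen hm hmt htM
  have h_reflected := hf.two_point_jensen (a := m) (t := m + M - t) (b := M) hm (by linarith)
    (by linarith)
  rw [show M - (m + M - t) = t - m by ring, show m + M - t - m = M - t by ring] at h_reflected
  have hMm : 0 < M - m := sub_pos.2 hmM
  have h_weight : (t - m) / (M - m) * f (M - t) + (M - t) / (M - m) * f (t - m) =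
      ((t - m) * f (M - t) + (M - t) * f (t - m)) / (M - m) := by ring
  rw [h_weight, mul_div_assoc', le_sub_iff_add_le, add_div' _ _ _ hMm.ne', div_le_iff₀ hMm]
  linarith

theorem hermite_hadamard_left (hf : Superquadratic f) (hfc : Continuous f) {a b : ℝ}
    (ha : 0 ≤ a) (hab : a < b) :
    f ((a + b) / 2) + 2 * ∫ u in (0 : ℝ)..1 / 2, f (u * (b - a)) ≤
      1 / (b - a) * ∫ t in a..b, f t := by
  set c := (a + b) / 2 with hc
  obtain ⟨C, hC⟩ := hf c (by rw [hc]; linarith)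
  have h_support : ∫ t in a..b, (f c + C * (t - c) + f |t - c|) ≤ ∫ t in a..b, f t :=
    integral_mono_on hab.le (Continuous.intervalIntegrable (by fun_prop) _ _)
      (hfc.intervalIntegrable a b) fun t ht => hC t (ha.trans ht.1)
  have h_linear : ∫ t in a..b, (f c + C * (t - c)) = (b - a) * f c := by
    rw [integral_add intervalIntegrable_const (Continuous.intervalIntegrable (by fun_prop) _ _),
      integral_const_mul, integral_comp_sub_right (fun x => x), integral_id, integral_const,
      smul_eq_mul, hc]
    ring
  have hba : 0 < b - a := sub_pos.2 hab
  rw [integral_add (Continuous.intervalIntegrable (by fun_prop) _ _)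
    (Continuous.intervalIntegrable (by fun_prop) _ _), h_linear,
    integral_comp_abs_sub_midpoint hfc hab.le] at h_support
  rw [integral_zero_half_comp_mul _ hba.ne', one_div, le_inv_mul_iff₀ hba]
  refine le_of_eq_of_le ?_ h_support
  rw [mul_add, mul_left_comm, mul_inv_cancel_left₀ hba.ne']

end Superquadratic

theorem mercer_hermite_hadamard_superquadratic_second_general
    (m M : ℝ) (hm : 0 ≤ m)
    (f : ℝ → ℝ) (hf : Superquadratic f) (hf_cont : Continuous f)
    (β : ℝ → ℝ)
    (hβ : ∀ t ∈ Set.Icc m M,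
      β t = (t - m) / (M - m) * f (M - t) + (M - t) / (M - m) * f (t - m))
    (x y : ℝ) (hx : x ∈ Set.Icc m M) (hy : y ∈ Set.Icc m M) (hxy : x < y) :
    f (m + M - (x + y) / 2) + 2 * (∫ u in (0 : ℝ)..(1 / 2), f (u * |x - y|)) ≤
        f m + f M - (1 / (y - x)) * (∫ u in x..y, (f u + 2 * β u)) ∧
      f m + f M - (1 / (y - x)) * (∫ u in x..y, (f u + 2 * β u)) ≤
        f m + f M - f ((x + y) / 2) - (2 / (y - x)) * (∫ u in x..y, β u) -
          2 * (∫ u in (0 : ℝ)..(1 / 2), f (u * |x - y|)) := by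
  obtain ⟨hmx, -⟩ := hx
  obtain ⟨-, hyM⟩ := hy
  have hmM : m < M := by linarith
  have hxy_Icc : uIcc x y ⊆ Icc m M := by
    rw [uIcc_of_le hxy.le]
    exact Icc_subset_Icc hmx hyM
  have hβ_int : IntervalIntegrable β MeasureTheory.volume x y :=
    ((Continuous.continuousOn (by fun_prop)).congr fun t ht =>
      hβ t (hxy_Icc ht)).intervalIntegrable
  have hf_int : IntervalIntegrable f MeasureTheory.volume x y := hf_cont.intervalIntegrable x y
  have h_mercer : ∫ t in x..y, f (m + M - t) ≤
      (y - x) * (f m + f M) - ∫ u in x..y, (f u + 2 * β u) := by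
    have h_int := hf_int.add (hβ_int.const_mul 2)
    rw [← smul_eq_mul, ← integral_const, ← integral_sub intervalIntegrable_const h_int]
    refine integral_mono_on hxy.le (Continuous.intervalIntegrable (by fun_prop) _ _)
      (intervalIntegrable_const.sub h_int) fun t ht => ?_
    have ht' : t ∈ Icc m M := hxy_Icc (Icc_subset_uIcc ht)
    rw [hβ t ht']
    linarith [hf.mercer hm hmM ht'.1 ht'.2]
  have h_reflected := hf.hermite_hadamard_left hf_cont (a := m + M - y) (b := m + M - x)
    (by linarith) (by linarith)
  rw [← integral_comp_sub_left, show (m + M - y + (m + M - x)) / 2 = m + M - (x + y) / 2 by ring,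
    show m + M - x - (m + M - y) = y - x by ring] at h_reflected
  have h_direct := hf.hermite_hadamard_left hf_cont (hm.trans hmx) hxy
  rw [abs_sub_comm, abs_of_pos (sub_pos.2 hxy)]
  constructor
  · calc _ ≤ 1 / (y - x) * ∫ t in x..y, f (m + M - t) := h_reflected
      _ ≤ 1 / (y - x) * ((y - x) * (f m + f M) - ∫ u in x..y, (f u + 2 * β u)) := by
        gcongr
      _ = _ := by rw [mul_sub, ← mul_assoc, one_div_mul_cancel (sub_pos.2 hxy).ne', one_mul]
  · rw [integral_add hf_int (hβ_int.const_mul 2), integral_const_mul]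
    linarith [show 1 / (y - x) * ((∫ u in x..y, f u) + 2 * ∫ u in x..y, β u) =
      1 / (y - x) * (∫ u in x..y, f u) + 2 / (y - x) * ∫ u in x..y, β u by ring]

theorem mercer_hermite_hadamard_superquadratic_second
    (m M : ℝ) (hm : 0 ≤ m) (hmM : m < M)
    (f : ℝ → ℝ) (hf : Superquadratic f) (hf_cont : Continuous f)
    (β : ℝ → ℝ)
    (hβ : ∀ t ∈ Set.Icc m M,
      β t = (t - m) / (M - m) * f (M - t) + (M - t) / (M - m) * f (t - m))
    (x y : ℝ) (hx : x ∈ Set.Icc m M) (hy : y ∈ Set.Icc m M) (hxy : x < y) :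
    f (m + M - (x + y) / 2) + 2 * (∫ u in (0 : ℝ)..(1 / 2), f (u * |x - y|)) ≤
        f m + f M - (1 / (y - x)) * (∫ u in x..y, (f u + 2 * β u)) ∧
      f m + f M - (1 / (y - x)) * (∫ u in x..y, (f u + 2 * β u)) ≤
        f m + f M - f ((x + y) / 2) - (2 / (y - x)) * (∫ u in x..y, β u) -
          2 * (∫ u in (0 : ℝ)..(1 / 2), f (u * |x - y|)) :=
  mercer_hermite_hadamard_superquadratic_second_general m M hm f hf hf_cont β hβ x y hx hy hxy
end

section
/- Let 0 ≤ m < M, let x, y ∈ [m,M] with x < y, and let 1 ≤ p ≤ 2. Define β_p(t) = ((M−t)(t−m)/(M−m))·((M−t)^{p−1} + (t−m)^{p−1}). Then the reversed inequalities hold: (m + M − (x+y)/2)^p + (1/(2^p(p+1)))·|x−y|^p ≥ ((M+m−x)^{p+1} − (M+m−y)^{p+1}) / ((p+1)(y−x)) ≥ m^p + M^p − (x^p + y^p)/2 − (β_p(x) + β_p(y)) − 2|x−y|^p/((p+1)(p+2)). -/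
/-!
For `1 ≤ p ≤ 2`, subadditivity of `u ↦ u ^ (p - 1)` yields the tangent bound
`t ^ p ≤ s ^ p + p s ^ (p - 1) (t - s) + |t - s| ^ p` for `s, t ≥ 0` (that is, `-t ^ p` is
superquadratic). Integrated around the midpoint of `[a, b]` it bounds the mean value
`(b ^ (p + 1) - a ^ (p + 1)) / ((p + 1) (b - a))` of `t ^ p` from above. Applied at `t` towards
both endpoints, it bounds the chord of `t ^ p` over `[a, b]` by `t ^ p` plus an error term;
integrating gives the lower bound `(a ^ p + b ^ p) / 2 - error` for the mean. With
`a = M + m - y` and `b = M + m - x`, the chord bound on `[m, M]` at `t` and at `M + m - t`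
gives `m ^ p + M ^ p ≤ t ^ p + (M + m - t) ^ p + 2 β_p(t)`, which bounds `a ^ p + b ^ p`
from below.
-/

open Real Set intervalIntegral

section PointwiseBounds

variable {p s u : ℝ}

theorem add_rpow_le_rpow_add_mul_add_rpow (hp1 : 1 ≤ p) (hp2 : p ≤ 2) (hs : 0 ≤ s)
    (hu : 0 ≤ u) : (s + u) ^ p ≤ s ^ p + p * s ^ (p - 1) * u + u ^ p := by
  have hg : ∀ v, HasDerivAt (fun v => s ^ p + p * s ^ (p - 1) * v + v ^ p - (s + v) ^ p)
      (p * s ^ (p - 1) + p * v ^ (p - 1) - p * (s + v) ^ (p - 1)) v := fun v => by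
    refine ((((hasDerivAt_id' v).const_mul (p * s ^ (p - 1))).const_add (s ^ p)).add
      (hasDerivAt_rpow_const (Or.inr hp1))).sub
      (((hasDerivAt_id' v).const_add s).rpow_const (Or.inr hp1)) |>.congr_deriv ?_
    ring
  have hmono := monotoneOn_of_deriv_nonneg (convex_Ici 0)
    (fun v _ => (hg v).continuousAt.continuousWithinAt)
    (fun v _ => (hg v).differentiableAt.differentiableWithinAt) fun v hv => by
      rw [interior_Ici] at hv
      have hsub := rpow_add_le_add_rpow hs hv.out.le (by linarith : 0 ≤ p - 1) (by linarith)
      rw [(hg v).deriv]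
      nlinarith
  have hg0 := hmono self_mem_Ici (mem_Ici.2 hu) hu
  simp only [add_zero, zero_rpow (by linarith : p ≠ 0), mul_zero, sub_self] at hg0
  linarith

theorem sub_rpow_le_rpow_sub_mul_add_rpow (hp1 : 1 ≤ p) (hp2 : p ≤ 2) (hu : 0 ≤ u)
    (hus : u ≤ s) : (s - u) ^ p ≤ s ^ p - p * s ^ (p - 1) * u + u ^ p := by
  have hg : ∀ v, HasDerivAt (fun v => s ^ p - p * s ^ (p - 1) * v + v ^ p - (s - v) ^ p)
      (p * v ^ (p - 1) + p * (s - v) ^ (p - 1) - p * s ^ (p - 1)) v := fun v => by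
    refine ((((hasDerivAt_id' v).const_mul (p * s ^ (p - 1))).const_sub (s ^ p)).add
      (hasDerivAt_rpow_const (Or.inr hp1))).sub
      (((hasDerivAt_id' v).const_sub s).rpow_const (Or.inr hp1)) |>.congr_deriv ?_
    ring
  have hmono := monotoneOn_of_deriv_nonneg (convex_Icc 0 s)
    (fun v _ => (hg v).continuousAt.continuousWithinAt)
    (fun v _ => (hg v).differentiableAt.differentiableWithinAt) fun v hv => by
      rw [interior_Icc] at hv
      have hsub := rpow_add_le_add_rpow hv.1.le (sub_nonneg.2 hv.2.le) (by linarith : 0 ≤ p - 1)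
        (by linarith)
      rw [add_sub_cancel, ← sub_nonneg] at hsub
      rw [(hg v).deriv]
      nlinarith
  have hg0 := hmono (left_mem_Icc.2 (hu.trans hus)) ⟨hu, hus⟩ hu
  simp only [sub_zero, zero_rpow (by linarith : p ≠ 0), mul_zero, sub_self, add_zero] at hg0
  linarith

variable {a b : ℝ}

theorem sub_mul_rpow_add_sub_mul_rpow_le (hp1 : 1 ≤ p) (hp2 : p ≤ 2) (ha : 0 ≤ a) {t : ℝ}
    (hat : a ≤ t) (htb : t ≤ b) :
    (b - t) * a ^ p + (t - a) * b ^ p ≤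
      (b - a) * t ^ p + (b - t) * (t - a) ^ p + (t - a) * (b - t) ^ p := by
  have hleft := sub_rpow_le_rpow_sub_mul_add_rpow hp1 hp2 (sub_nonneg.2 hat) (sub_le_self t ha)
  have hright := add_rpow_le_rpow_add_mul_add_rpow hp1 hp2 (ha.trans hat) (sub_nonneg.2 htb)
  rw [sub_sub_cancel] at hleft
  rw [add_sub_cancel] at hright
  linarith [mul_le_mul_of_nonneg_left hleft (sub_nonneg.2 htb),
    mul_le_mul_of_nonneg_left hright (sub_nonneg.2 hat)]

theorem rpow_add_rpow_le_of_mem_Icc {m M t : ℝ} (hp1 : 1 ≤ p) (hp2 : p ≤ 2) (hm : 0 ≤ m)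
    (hmM : m < M) (htm : m ≤ t) (htM : t ≤ M) :
    m ^ p + M ^ p ≤ t ^ p + (M + m - t) ^ p +
      2 * ((M - t) * (t - m) / (M - m) * ((M - t) ^ (p - 1) + (t - m) ^ (p - 1))) := by
  have hchord := sub_mul_rpow_add_sub_mul_rpow_le hp1 hp2 hm htm htM
  have hchord' := sub_mul_rpow_add_sub_mul_rpow_le hp1 hp2 hm (by linarith : m ≤ M + m - t)
    (by linarith : M + m - t ≤ M)
  rw [show M - (M + m - t) = t - m by ring, show M + m - t - m = M - t by ring] at hchord'
  have hsplit : ∀ u : ℝ, 0 ≤ u → u ^ p = u ^ (p - 1) * u := fun u hu => by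
    rw [← rpow_add_one' hu (by linarith), sub_add_cancel]
  rw [hsplit (t - m) (by linarith), hsplit (M - t) (by linarith)] at hchord hchord'
  have hMm : 0 < M - m := sub_pos.2 hmM
  have hβ : (M - m) * (2 * ((M - t) * (t - m) / (M - m) * ((M - t) ^ (p - 1) + (t - m) ^ (p - 1))))
      = 2 * ((M - t) * (t - m) * ((M - t) ^ (p - 1) + (t - m) ^ (p - 1))) := by field_simp
  rw [← mul_le_mul_iff_of_pos_left hMm, mul_add (M - m) (t ^ p + (M + m - t) ^ p), hβ]
  linarith

end PointwiseBounds

section Integrals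

variable {a b p r : ℝ}

theorem integral_sub_rpow (hr : -1 < r) :
    ∫ t in a..b, (t - a) ^ r = (b - a) ^ (r + 1) / (r + 1) := by
  rw [integral_comp_sub_right (· ^ r), sub_self, integral_rpow (Or.inl hr),
    zero_rpow (by linarith), sub_zero]

theorem integral_sub_mul_sub_rpow (hab : a ≤ b) (hr : 0 ≤ r) :
    ∫ t in a..b, (b - t) * (t - a) ^ r = (b - a) ^ (r + 2) / ((r + 1) * (r + 2)) := by
  have hsplit : EqOn (fun t => (b - t) * (t - a) ^ r)
      (fun t => (b - a) * (t - a) ^ r - (t - a) ^ (r + 1)) (uIcc a b) := fun t ht => by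
    rw [uIcc_of_le hab] at ht
    simp only [rpow_add_one' (sub_nonneg.2 ht.1) (by linarith : r + 1 ≠ 0)]
    ring
  rw [integral_congr hsplit,
    integral_sub (Continuous.intervalIntegrable (by fun_prop (disch := assumption)) _ _)
      (Continuous.intervalIntegrable (by fun_prop (disch := linarith)) _ _),
    integral_const_mul, integral_sub_rpow (by linarith), integral_sub_rpow (by linarith),
    show r + 1 + 1 = r + 2 by ring]
  have hd : (b - a) ^ (r + 2) = (b - a) ^ (r + 1) * (b - a) := by
    rw [← rpow_add_one' (sub_nonneg.2 hab) (by linarith)]; ring_nf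
  rw [hd]
  field_simp
  ring

theorem integral_sub_mul_rsub_rpow (hab : a ≤ b) (hr : 0 ≤ r) :
    ∫ t in a..b, (t - a) * (b - t) ^ r = (b - a) ^ (r + 2) / ((r + 1) * (r + 2)) := by
  have hreflect :=
    integral_comp_sub_left (a := a) (b := b) (fun t => (b - t) * (t - a) ^ r) (a + b)
  simp only [add_sub_cancel_left, add_sub_cancel_right] at hreflect
  rw [← integral_sub_mul_sub_rpow hab hr, ← hreflect]
  congr 1; ext t; ring_nf

theorem integral_rpow_symm_le (hp1 : 1 ≤ p) (hp2 : p ≤ 2) {c h : ℝ} (hh : 0 ≤ h)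
    (hhc : h ≤ c) :
    ∫ t in c - h..c + h, t ^ p ≤ 2 * h * (c ^ p + h ^ p / (p + 1)) := by
  have hint : ∀ u v : ℝ, IntervalIntegrable (· ^ p) MeasureTheory.volume u v :=
    fun _ _ => intervalIntegrable_rpow' (by linarith)
  calc ∫ t in c - h..c + h, t ^ p = ∫ u in 0..h, ((c + u) ^ p + (c - u) ^ p) := by
        rw [← integral_add_adjacent_intervals (hint (c - h) c) (hint c (c + h)),
          integral_add (Continuous.intervalIntegrable (by fun_prop (disch := linarith)) _ _)
            (Continuous.intervalIntegrable (by fun_prop (disch := linarith)) _ _),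
          integral_comp_add_left (· ^ p), integral_comp_sub_left (· ^ p), add_zero, sub_zero,
          add_comm]
    _ ≤ ∫ u in 0..h, 2 * (c ^ p + u ^ p) := by
        refine integral_mono_on hh
          (Continuous.intervalIntegrable (by fun_prop (disch := linarith)) _ _)
          (Continuous.intervalIntegrable (by fun_prop (disch := linarith)) _ _) fun u hu => ?_
        have hplus := add_rpow_le_rpow_add_mul_add_rpow hp1 hp2 (hh.trans hhc) hu.1
        have hminus := sub_rpow_le_rpow_sub_mul_add_rpow hp1 hp2 hu.1 (hu.2.trans hhc)
        linarith
    _ = 2 * h * (c ^ p + h ^ p / (p + 1)) := by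
        rw [integral_const_mul, integral_add intervalIntegrable_const (hint 0 h), integral_const,
          integral_rpow (Or.inl (by linarith)), zero_rpow (by linarith),
          rpow_add_one' hh (by linarith)]
        field_simp
        ring

theorem sq_mul_add_rpow_le_integral (hp1 : 1 ≤ p) (hp2 : p ≤ 2) (ha : 0 ≤ a) (hab : a ≤ b) :
    (b - a) ^ 2 * (a ^ p + b ^ p) / 2 ≤
      (b - a) * (∫ t in a..b, t ^ p) + 2 * (b - a) ^ (p + 2) / ((p + 1) * (p + 2)) := by
  have hp0 : 0 ≤ p := by linarith
  calc (b - a) ^ 2 * (a ^ p + b ^ p) / 2 = ∫ t in a..b, ((b - t) * a ^ p + (t - a) * b ^ p) := by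
        rw [integral_add (Continuous.intervalIntegrable (by fun_prop) _ _)
            (Continuous.intervalIntegrable (by fun_prop) _ _), integral_mul_const,
          integral_mul_const, integral_comp_sub_left (fun t => t),
          integral_comp_sub_right (fun t => t)]
        simp
        ring
    _ ≤ ∫ t in a..b, ((b - a) * t ^ p + (b - t) * (t - a) ^ p + (t - a) * (b - t) ^ p) :=
        integral_mono_on hab (Continuous.intervalIntegrable (by fun_prop) _ _)
          (Continuous.intervalIntegrable (by fun_prop (disch := assumption)) _ _) fun t ht =>
          sub_mul_rpow_add_sub_mul_rpow_le hp1 hp2 ha ht.1 ht.2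
    _ = _ := by
        rw [integral_add (Continuous.intervalIntegrable (by fun_prop (disch := assumption)) _ _)
            (Continuous.intervalIntegrable (by fun_prop (disch := assumption)) _ _),
          integral_add (Continuous.intervalIntegrable (by fun_prop (disch := assumption)) _ _)
            (Continuous.intervalIntegrable (by fun_prop (disch := assumption)) _ _),
          integral_const_mul, integral_sub_mul_sub_rpow hab hp0,
          integral_sub_mul_rsub_rpow hab hp0]
        ring

end Integrals

section MeanValueBounds

variable {a b p : ℝ}

theorem rpow_add_one_sub_div_le (hp1 : 1 ≤ p) (hp2 : p ≤ 2) (ha : 0 ≤ a) (hab : a < b) :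
    (b ^ (p + 1) - a ^ (p + 1)) / ((p + 1) * (b - a)) ≤
      ((a + b) / 2) ^ p + 1 / (2 ^ p * (p + 1)) * (b - a) ^ p := by
  have h := integral_rpow_symm_le hp1 hp2 (c := (a + b) / 2) (h := (b - a) / 2)
    (by linarith) (by linarith)
  rw [show (a + b) / 2 - (b - a) / 2 = a by ring, show (a + b) / 2 + (b - a) / 2 = b by ring,
    integral_rpow (Or.inl (by linarith)), div_rpow (x := b - a) (by linarith) zero_le_two,
    div_le_iff₀ (by linarith)] at h
  rw [div_le_iff₀ (mul_pos (by linarith) (by linarith))]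
  convert h using 1
  field_simp

theorem le_rpow_add_one_sub_div (hp1 : 1 ≤ p) (hp2 : p ≤ 2) (ha : 0 ≤ a) (hab : a < b) :
    (a ^ p + b ^ p) / 2 - 2 * (b - a) ^ p / ((p + 1) * (p + 2)) ≤
      (b ^ (p + 1) - a ^ (p + 1)) / ((p + 1) * (b - a)) := by
  have hd : 0 < b - a := sub_pos.2 hab
  have hp : 0 < p + 1 := by linarith
  have h := sq_mul_add_rpow_le_integral hp1 hp2 ha hab.le
  rw [integral_rpow (Or.inl (by linarith)), rpow_add hd, rpow_two] at h
  rw [le_div_iff₀ (mul_pos hp hd), ← mul_le_mul_iff_of_pos_right hd]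
  calc ((a ^ p + b ^ p) / 2 - 2 * (b - a) ^ p / ((p + 1) * (p + 2))) * ((p + 1) * (b - a)) * (b - a)
      = (p + 1) * ((b - a) ^ 2 * (a ^ p + b ^ p) / 2 -
          2 * ((b - a) ^ p * (b - a) ^ 2) / ((p + 1) * (p + 2))) := by
        field_simp
    _ ≤ (p + 1) * ((b - a) * ((b ^ (p + 1) - a ^ (p + 1)) / (p + 1))) := by gcongr; linarith
    _ = (b ^ (p + 1) - a ^ (p + 1)) * (b - a) := by field_simp

end MeanValueBounds

theorem mercer_hermite_hadamard_rpow_reversed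
    (m M : ℝ) (hm : 0 ≤ m) (hmM : m < M)
    (x y : ℝ) (hx : x ∈ Set.Icc m M) (hy : y ∈ Set.Icc m M) (hxy : x < y)
    (p : ℝ) (hp1 : 1 ≤ p) (hp2 : p ≤ 2)
    (βp : ℝ → ℝ)
    (hβp : ∀ t ∈ Set.Icc m M,
      βp t = (M - t) * (t - m) / (M - m) * ((M - t) ^ (p - 1) + (t - m) ^ (p - 1))) :
    ((M + m - x) ^ (p + 1) - (M + m - y) ^ (p + 1)) / ((p + 1) * (y - x)) ≤
        (m + M - (x + y) / 2) ^ p + 1 / (2 ^ p * (p + 1)) * |x - y| ^ p ∧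
      m ^ p + M ^ p - (x ^ p + y ^ p) / 2 - (βp x + βp y) -
          2 * |x - y| ^ p / ((p + 1) * (p + 2)) ≤
        ((M + m - x) ^ (p + 1) - (M + m - y) ^ (p + 1)) / ((p + 1) * (y - x)) := by
  have ha : 0 ≤ M + m - y := by linarith [hy.2]
  have hab : M + m - y < M + m - x := by linarith
  have hlen : y - x = (M + m - x) - (M + m - y) := by ring
  have habs : |x - y| = (M + m - x) - (M + m - y) := by
    rw [abs_sub_comm, abs_of_pos (sub_pos.2 hxy), hlen]
  have hmid : m + M - (x + y) / 2 = ((M + m - y) + (M + m - x)) / 2 := by ring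
  rw [hlen, habs, hmid]
  refine ⟨rpow_add_one_sub_div_le hp1 hp2 ha hab, ?_⟩
  have hx' := rpow_add_rpow_le_of_mem_Icc hp1 hp2 hm hmM hx.1 hx.2
  have hy' := rpow_add_rpow_le_of_mem_Icc hp1 hp2 hm hmM hy.1 hy.2
  rw [← hβp x hx] at hx'
  rw [← hβp y hy] at hy'
  linarith [le_rpow_add_one_sub_div hp1 hp2 ha hab]
end

section
/- Let f : [0,∞) → ℝ be a superquadratic function. Then for all x, y > 0: f(x) + f(y) ≤ f(x+y) − 2·(y·f(x) + x·f(y))/(x+y). -/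
namespace Superquadratic

variable {f : ℝ → ℝ}

theorem map_zero_nonpos (hf : Superquadratic f) : f 0 ≤ 0 := by
  obtain ⟨C, hC⟩ := hf 0 le_rfl
  simpa using hC 0 le_rfl

theorem two_mul_mul_le_mul_sub (hf : Superquadratic f) {x y : ℝ} (hx : 0 ≤ x) (hy : 0 ≤ y) :
    2 * y * f x ≤ x * (f (x + y) - f x - f y) := by
  obtain ⟨C, hC⟩ := hf x hx
  have at_zero : 2 * f x ≤ C * x := by
    have := hC 0 le_rfl
    rw [zero_sub, abs_neg, abs_of_nonneg hx] at this
    linarith [hf.map_zero_nonpos]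
  have at_sum : f x + C * y + f y ≤ f (x + y) := by
    simpa [abs_of_nonneg hy] using hC (x + y) (add_nonneg hx hy)
  calc 2 * y * f x = y * (2 * f x) := by ring
    _ ≤ y * (C * x) := mul_le_mul_of_nonneg_left at_zero hy
    _ = x * (C * y) := by ring
    _ ≤ x * (f (x + y) - f x - f y) := mul_le_mul_of_nonneg_left (by linarith) hx

end Superquadratic

theorem superquadratic_superadditive_refinement
    (f : ℝ → ℝ) (hf : Superquadratic f)
    (x y : ℝ) (hx : 0 < x) (hy : 0 < y) :
    f x + f y ≤ f (x + y) - 2 * (y * f x + x * f y) / (x + y) := by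
  have hxy := hf.two_mul_mul_le_mul_sub hx.le hy.le
  have hyx := hf.two_mul_mul_le_mul_sub hy.le hx.le
  rw [add_comm y x] at hyx
  rw [le_sub_iff_add_le', ← le_sub_iff_add_le, div_le_iff₀ (add_pos hx hy)]
  linarith
end

section
/- Let f : [0,∞) → ℝ be a superquadratic function and let 0 ≤ y₁ ≤ x₁ ≤ x₂ ≤ y₂ with y₁ < y₂ and x₁ + x₂ = y₁ + y₂. Then f(x₁) + f(x₂) ≤ f(y₁) + f(y₂) − 2·((y₂−x₁)/(y₂−y₁))·f(x₁−y₁) − 2·((x₁−y₁)/(y₂−y₁))·f(x₂−y₁). -/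
theorem Superquadratic.two_point_jensen_s8 {f : ℝ → ℝ} (hf : Superquadratic f) {x y a b : ℝ}
    (hx : 0 ≤ x) (hy : 0 ≤ y) (ha : 0 ≤ a) (hb : 0 ≤ b) (hab : a + b = 1) :
    f (a * x + b * y) + a * f |x - (a * x + b * y)| + b * f |y - (a * x + b * y)|
      ≤ a * f x + b * f y := by
  set z := a * x + b * y
  obtain ⟨C, hC⟩ := hf z (by positivity)
  have hx' := mul_le_mul_of_nonneg_left (hC x hx) ha
  have hy' := mul_le_mul_of_nonneg_left (hC y hy) hb
  have hlin : a * (C * (x - z)) + b * (C * (y - z)) = 0 := by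
    linear_combination C * (a * x + b * y) * (-hab)
  linear_combination hx' + hy' - hlin - f z * hab

theorem superquadratic_majorization_general
    (f : ℝ → ℝ) (hf : Superquadratic f)
    (y₁ x₁ x₂ y₂ : ℝ) (hy₁ : 0 ≤ y₁) (h₁ : y₁ ≤ x₁) (h₂ : x₁ ≤ x₂)
    (hy : y₁ < y₂) (hsum : x₁ + x₂ = y₁ + y₂) :
    f x₁ + f x₂ ≤ f y₁ + f y₂ - 2 * ((y₂ - x₁) / (y₂ - y₁)) * f (x₁ - y₁)
      - 2 * ((x₁ - y₁) / (y₂ - y₁)) * f (x₂ - y₁) := by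
  have hd : y₂ - y₁ ≠ 0 := by linarith
  set t := (y₂ - x₁) / (y₂ - y₁) with ht
  set s := (x₁ - y₁) / (y₂ - y₁) with hs
  have hts : t + s = 1 := by rw [ht, hs, ← add_div]; field_simp; ring
  have hx₁ : t * y₁ + s * y₂ = x₁ := by rw [ht, hs]; field_simp; ring
  have hx₂ : s * y₁ + t * y₂ = x₂ := by
    rw [ht, hs]; field_simp; linear_combination -(y₂ - y₁) * hsum
  have ht0 : 0 ≤ t := div_nonneg (by linarith) (by linarith)
  have hs0 : 0 ≤ s := div_nonneg (by linarith) (by linarith)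
  have hy₂ : 0 ≤ y₂ := by linarith
  have key₁ := hf.two_point_jensen_s8 hy₁ hy₂ ht0 hs0 hts
  have key₂ := hf.two_point_jensen_s8 hy₁ hy₂ hs0 ht0 (by linarith)
  rw [hx₁, abs_sub_comm, abs_of_nonneg (by linarith), abs_of_nonneg (by linarith),
    show y₂ - x₁ = x₂ - y₁ by linarith] at key₁
  rw [hx₂, abs_sub_comm, abs_of_nonneg (by linarith), abs_of_nonneg (by linarith),
    show y₂ - x₂ = x₁ - y₁ by linarith] at key₂
  linear_combination key₁ + key₂ + (f y₁ + f y₂) * hts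

theorem superquadratic_majorization
    (f : ℝ → ℝ) (hf : Superquadratic f)
    (y₁ x₁ x₂ y₂ : ℝ) (hy₁ : 0 ≤ y₁) (h₁ : y₁ ≤ x₁) (h₂ : x₁ ≤ x₂) (h₃ : x₂ ≤ y₂)
    (hy : y₁ < y₂) (hsum : x₁ + x₂ = y₁ + y₂) :
    f x₁ + f x₂ ≤ f y₁ + f y₂ - 2 * ((y₂ - x₁) / (y₂ - y₁)) * f (x₁ - y₁)
      - 2 * ((x₁ - y₁) / (y₂ - y₁)) * f (x₂ - y₁) :=
  superquadratic_majorization_general f hf y₁ x₁ x₂ y₂ hy₁ h₁ h₂ hy hsum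
end

section
/- Let f : [0,∞) → ℝ be a continuous superquadratic function, let 0 < m < M, and let β(t) = ((t−m)/(M−m))·f(M−t) + ((M−t)/(M−m))·f(t−m). Let H be a complex Hilbert space and let A, B, C, D be positive bounded operators on H with A + D = B + C and 0 ≤ A ≤ m·I ≤ B ≤ C ≤ M·I ≤ D (Loewner order). Let Φ : B(H) → B(H) be a unital positive linear map. Then, with operator functions formed by continuous functional calculus: f(Φ(B)) + f(Φ(C)) + β(Φ(B)) + β(Φ(C)) ≤ Φ(f(A)) + Φ(f(D)) − Φ(f(m·I − A)) − Φ(f(D − M·I)) + ((f(M−m))/(M−m))·(Φ(A − D) + (M−m)·I). -/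
namespace Superquadratic

variable {f : ℝ → ℝ} {m M : ℝ}

lemma exists_support (hf : Superquadratic f) {x : ℝ} (hx : 0 ≤ x) :
    ∃ C : ℝ, (∀ y, x ≤ y → f x + C * (y - x) + f (y - x) ≤ f y) ∧
      ∀ y, 0 ≤ y → y ≤ x → f x + C * (y - x) + f (x - y) ≤ f y := by
  obtain ⟨C, hC⟩ := hf x hx
  refine ⟨C, fun y hy => ?_, fun y hy hyx => ?_⟩
  · simpa [abs_of_nonneg (sub_nonneg.mpr hy)] using hC y (hx.trans hy)
  · simpa [abs_of_nonpos (sub_nonpos.mpr hyx)] using hC y hy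

lemma add_le_chord (hf : Superquadratic f) (hm : 0 ≤ m) (hmM : m < M) {t : ℝ}
    (hmt : m ≤ t) (htM : t ≤ M) :
    f t + ((t - m) / (M - m) * f (M - t) + (M - t) / (M - m) * f (t - m)) ≤
      f m + slope f m M * (t - m) := by
  obtain ⟨C, hright, hleft⟩ := hf.exists_support (hm.trans hmt)
  have h₁ := mul_le_mul_of_nonneg_left (hleft m hm hmt) (sub_nonneg.mpr htM)
  have h₂ := mul_le_mul_of_nonneg_left (hright M htM) (sub_nonneg.mpr hmt)
  have hMm : 0 < M - m := sub_pos.mpr hmM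
  rw [slope_def_field]
  field_simp
  linarith

lemma chord_add_le_of_le (hf : Superquadratic f) (hmM : m < M) {a : ℝ} (ha : 0 ≤ a)
    (ham : a ≤ m) :
    f m + slope f m M * (a - m) + f (M - m) / (M - m) * (m - a) ≤ f a - f (m - a) := by
  obtain ⟨C, hright, hleft⟩ := hf.exists_support (ha.trans ham)
  have h₁ := mul_le_mul_of_nonneg_left (hleft a ha ham) (sub_nonneg.mpr hmM.le)
  have h₂ := mul_le_mul_of_nonneg_left (hright M hmM.le) (sub_nonneg.mpr ham)
  have hMm : 0 < M - m := sub_pos.mpr hmM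
  rw [slope_def_field]
  field_simp
  linarith

lemma chord_add_le_of_ge (hf : Superquadratic f) (hm : 0 ≤ m) (hmM : m < M) {d : ℝ}
    (hMd : M ≤ d) :
    f m + slope f m M * (d - m) + f (M - m) / (M - m) * (d - M) ≤ f d - f (d - M) := by
  obtain ⟨C, hright, hleft⟩ := hf.exists_support (hm.trans hmM.le)
  have h₁ := mul_le_mul_of_nonneg_left (hright d hMd) (sub_nonneg.mpr hmM.le)
  have h₂ := mul_le_mul_of_nonneg_left (hleft m hm hmM.le) (sub_nonneg.mpr hMd)
  have hMm : 0 < M - m := sub_pos.mpr hmM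
  rw [slope_def_field]
  field_simp
  linarith

end Superquadratic

section CFC

variable {A : Type*} [CStarAlgebra A]

lemma cfc_const_add_mul (c k : ℝ) (a : A) (ha : IsSelfAdjoint a) :
    cfc (fun t : ℝ => c + k * t) a = c • (1 : A) + k • a := by
  rw [cfc_add a (fun _ => c) (fun t => k * t), cfc_const c a, cfc_const_mul k (fun t : ℝ => t) a,
    cfc_id' ℝ a, Algebra.algebraMap_eq_smul_one]

lemma cfc_comp_const_sub (g : ℝ → ℝ) (r : ℝ) (a : A) (ha : IsSelfAdjoint a)
    (hg : Continuous g) : cfc (fun t => g (r - t)) a = cfc g (r • 1 - a) := by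
  rw [cfc_comp' g (fun t => r - t) a, cfc_sub (fun _ => r) (fun t : ℝ => t) a, cfc_const r a,
    cfc_id' ℝ a, Algebra.algebraMap_eq_smul_one]

lemma cfc_comp_sub_const (g : ℝ → ℝ) (r : ℝ) (a : A) (ha : IsSelfAdjoint a)
    (hg : Continuous g) : cfc (fun t => g (t - r)) a = cfc g (a - r • 1) := by
  rw [cfc_comp' g (fun t => t - r) a, cfc_sub (fun t : ℝ => t) (fun _ => r) a, cfc_const r a,
    cfc_id' ℝ a, Algebra.algebraMap_eq_smul_one]

variable [PartialOrder A] [StarOrderedRing A]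

lemma IsSelfAdjoint.of_smul_one_le {r : ℝ} {a : A} (h : r • (1 : A) ≤ a) : IsSelfAdjoint a :=
  .of_ge h ((IsSelfAdjoint.all r).smul (.one A))

lemma le_of_mem_spectrum_of_smul_one_le {r : ℝ} {a : A} (h : r • (1 : A) ≤ a) :
    ∀ t ∈ spectrum ℝ a, r ≤ t :=
  (algebraMap_le_iff_le_spectrum (IsSelfAdjoint.of_smul_one_le h)).mp
    (by rwa [Algebra.algebraMap_eq_smul_one])

lemma le_of_mem_spectrum_of_le_smul_one {r : ℝ} {a : A} (ha : IsSelfAdjoint a)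
    (h : a ≤ r • (1 : A)) : ∀ t ∈ spectrum ℝ a, t ≤ r :=
  (le_algebraMap_iff_spectrum_le ha).mp (by rwa [Algebra.algebraMap_eq_smul_one])

namespace Superquadratic

variable {f : ℝ → ℝ} {m M : ℝ}

lemma cfc_add_cfc_le_chord (hf : Superquadratic f) (hf_cont : Continuous f)
    (hm : 0 ≤ m) (hmM : m < M) {a : A} (hma : m • 1 ≤ a) (haM : a ≤ M • 1) :
    cfc f a + cfc (fun t => (t - m) / (M - m) * f (M - t) + (M - t) / (M - m) * f (t - m)) a ≤
      f m • 1 + slope f m M • (a - m • 1) := by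
  have ha := IsSelfAdjoint.of_smul_one_le hma
  calc _ = cfc (fun t => f t + ((t - m) / (M - m) * f (M - t) +
        (M - t) / (M - m) * f (t - m))) a := (cfc_add ..).symm
    _ ≤ cfc (fun t => (f m - slope f m M * m) + slope f m M * t) a := cfc_mono fun t ht =>
        (hf.add_le_chord hm hmM (le_of_mem_spectrum_of_smul_one_le hma t ht)
          (le_of_mem_spectrum_of_le_smul_one ha haM t ht)).trans_eq (by ring)
    _ = _ := by rw [cfc_const_add_mul _ _ a ha]; module

lemma chord_add_le_cfc_sub_cfc_const_sub (hf : Superquadratic f) (hf_cont : Continuous f)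
    (hmM : m < M) {a : A} (ha₀ : 0 ≤ a) (ham : a ≤ m • 1) :
    f m • 1 + slope f m M • (a - m • 1) + (f (M - m) / (M - m)) • (m • 1 - a) ≤
      cfc f a - cfc f (m • 1 - a) := by
  have ha := IsSelfAdjoint.of_nonneg ha₀
  set γ := f (M - m) / (M - m)
  calc _ = cfc (fun t => (f m - slope f m M * m + γ * m) + (slope f m M - γ) * t) a := by
        rw [cfc_const_add_mul _ _ a ha]; module
    _ ≤ cfc (fun t => f t - f (m - t)) a := cfc_mono fun t ht =>
        (hf.chord_add_le_of_le hmM (spectrum_nonneg_of_nonneg ha₀ ht)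
          (le_of_mem_spectrum_of_le_smul_one ha ham t ht)).trans_eq' (by ring)
    _ = _ := by rw [cfc_sub .., cfc_comp_const_sub f m a ha hf_cont]

lemma chord_add_le_cfc_sub_cfc_sub_const (hf : Superquadratic f) (hf_cont : Continuous f)
    (hm : 0 ≤ m) (hmM : m < M) {a : A} (hMa : M • 1 ≤ a) :
    f m • 1 + slope f m M • (a - m • 1) + (f (M - m) / (M - m)) • (a - M • 1) ≤
      cfc f a - cfc f (a - M • 1) := by
  have ha := IsSelfAdjoint.of_smul_one_le hMa
  set γ := f (M - m) / (M - m)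
  calc _ = cfc (fun t => (f m - slope f m M * m - γ * M) + (slope f m M + γ) * t) a := by
        rw [cfc_const_add_mul _ _ a ha]; module
    _ ≤ cfc (fun t => f t - f (t - M)) a := cfc_mono fun t ht =>
        (hf.chord_add_le_of_ge hm hmM (le_of_mem_spectrum_of_smul_one_le hMa t ht)).trans_eq'
          (by ring)
    _ = _ := by rw [cfc_sub .., cfc_comp_sub_const f M a ha hf_cont]

end Superquadratic

end CFC

theorem operator_mercer_superquadratic
    {H : Type*} [NormedAddCommGroup H] [InnerProductSpace ℂ H] [CompleteSpace H]
    (f : ℝ → ℝ) (hf_cont : Continuous f) (hf : Superquadratic f)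
    (m M : ℝ) (hm : 0 < m) (hmM : m < M)
    (β : ℝ → ℝ)
    (hβ : ∀ t : ℝ,
      β t = (t - m) / (M - m) * f (M - t) + (M - t) / (M - m) * f (t - m))
    (A B C D : H →L[ℂ] H)
    (hA : 0 ≤ A) (hAmI : A ≤ m • 1) (hmIB : m • (1 : H →L[ℂ] H) ≤ B)
    (hBC : B ≤ C) (hCMI : C ≤ M • 1) (hMID : M • (1 : H →L[ℂ] H) ≤ D)
    (hsum : A + D = B + C)
    (Φ : (H →L[ℂ] H) →ₗ[ℂ] (H →L[ℂ] H))
    (hΦ_unital : Φ 1 = 1) (hΦ_pos : ∀ X : H →L[ℂ] H, 0 ≤ X → 0 ≤ Φ X) :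
    cfc f (Φ B) + cfc f (Φ C) + cfc β (Φ B) + cfc β (Φ C) ≤
      Φ (cfc f A) + Φ (cfc f D) - Φ (cfc f (m • 1 - A)) - Φ (cfc f (D - M • 1))
        + (f (M - m) / (M - m)) • (Φ (A - D) + (M - m) • 1) := by
  obtain rfl : β = fun t => (t - m) / (M - m) * f (M - t) + (M - t) / (M - m) * f (t - m) :=
    funext hβ
  have hΦ : Monotone Φ := (PositiveLinearMap.mk₀ Φ hΦ_pos).monotone'
  have hΦ_smul_one (r : ℝ) : Φ (r • 1) = r • 1 := by
    rw [LinearMap.map_smul_of_tower, hΦ_unital]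
  have hΦB := hf.cfc_add_cfc_le_chord hf_cont hm.le hmM
    (hΦ_smul_one m ▸ hΦ hmIB) (hΦ_smul_one M ▸ hΦ (hBC.trans hCMI))
  have hΦC := hf.cfc_add_cfc_le_chord hf_cont hm.le hmM
    (hΦ_smul_one m ▸ hΦ (hmIB.trans hBC)) (hΦ_smul_one M ▸ hΦ hCMI)
  have hΦA := hΦ (hf.chord_add_le_cfc_sub_cfc_const_sub hf_cont hmM hA hAmI)
  have hΦD := hΦ (hf.chord_add_le_cfc_sub_cfc_sub_const hf_cont hm.le hmM hMID)
  have hΦsum : Φ A + Φ D = Φ B + Φ C := by rw [← map_add, hsum, map_add]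
  simp only [map_add, map_sub, LinearMap.map_smul_of_tower, hΦ_unital] at hΦA hΦD ⊢
  linear_combination (norm := skip) hΦB + hΦC + hΦA + hΦD - slope f m M • hΦsum
  exact le_of_eq (by module)
end

section
/- Let 0 ≤ m < M, let f : [0,∞) → ℝ be a superquadratic function, and let β(t) = ((t−m)/(M−m))·f(M−t) + ((M−t)/(M−m))·f(t−m). Then for every x ∈ [m,M]: f(M + m − x) ≤ f(m) + f(M) − f(x) − 2β(x). -/
theorem Superquadratic.mul_apply_add_le {f : ℝ → ℝ} (hf : Superquadratic f) {a b t : ℝ}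
    (ha : 0 ≤ a) (hat : a ≤ t) (htb : t ≤ b) :
    (b - a) * f t + (t - a) * f (b - t) + (b - t) * f (t - a) ≤ (b - t) * f a + (t - a) * f b := by
  obtain ⟨C, hC⟩ := hf t (ha.trans hat)
  have hfa : f t + C * (a - t) + f (t - a) ≤ f a := by
    simpa only [abs_of_nonpos (sub_nonpos.2 hat), neg_sub] using hC a ha
  have hfb : f t + C * (b - t) + f (b - t) ≤ f b := by
    simpa only [abs_of_nonneg (sub_nonneg.2 htb)] using hC b (by linarith)
  linarith [mul_le_mul_of_nonneg_left hfa (sub_nonneg.2 htb),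
    mul_le_mul_of_nonneg_left hfb (sub_nonneg.2 hat)]

theorem mercer_pointwise_superquadratic
    (m M : ℝ) (hm : 0 ≤ m) (hmM : m < M)
    (f : ℝ → ℝ) (hf : Superquadratic f)
    (β : ℝ → ℝ)
    (hβ : ∀ t ∈ Set.Icc m M,
      β t = (t - m) / (M - m) * f (M - t) + (M - t) / (M - m) * f (t - m))
    (x : ℝ) (hx : x ∈ Set.Icc m M) :
    f (M + m - x) ≤ f m + f M - f x - 2 * β x := by
  obtain ⟨hmx, hxM⟩ := hx
  have hMm : 0 < M - m := sub_pos.2 hmM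
  have hβx : (M - m) * β x = (x - m) * f (M - x) + (M - x) * f (x - m) := by
    rw [hβ x ⟨hmx, hxM⟩]
    field_simp
  have at_x := hf.mul_apply_add_le hm hmx hxM
  have at_reflected := hf.mul_apply_add_le (b := M) (t := M + m - x) hm (by linarith) (by linarith)
  rw [show M - (M + m - x) = x - m by ring, show M + m - x - m = M - x by ring] at at_reflected
  have hsum : (M - m) * (f (M + m - x) + f x + 2 * β x) ≤ (M - m) * (f m + f M) := by
    linarith
  linarith [le_of_mul_le_mul_left hsum hMm]
end

section
/- Let f : [0,∞) → ℝ be a superquadratic function and let 0 ≤ m < M. Then for every s ≥ M: f(s) − f(s−M) + ((M−s)/(M−m))·f(M−m) ≥ ((M−s)/(M−m))·f(m) + ((s−m)/(M−m))·f(M). -/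
/-- The superquadratic analogue of the three-chord lemma for convex functions: the support
constant `C` at `x` separates the corrected slopes on `[a, x]` and on `[x, b]`. -/
theorem Superquadratic.mul_sub_le_mul_sub {f : ℝ → ℝ} (hf : Superquadratic f) {a x b : ℝ}
    (ha : 0 ≤ a) (hax : a ≤ x) (hxb : x ≤ b) :
    (b - x) * (f x - f a + f (x - a)) ≤ (x - a) * (f b - f x - f (b - x)) := by
  obtain ⟨C, hC⟩ := hf x (ha.trans hax)
  have left : f x - f a + f (x - a) ≤ C * (x - a) := by
    have h := hC a ha
    rw [abs_of_nonpos (sub_nonpos.2 hax), neg_sub] at h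
    linarith
  have right : C * (b - x) ≤ f b - f x - f (b - x) := by
    have h := hC b (by linarith)
    rw [abs_of_nonneg (sub_nonneg.2 hxb)] at h
    linarith
  calc (b - x) * (f x - f a + f (x - a))
      ≤ (b - x) * (C * (x - a)) := mul_le_mul_of_nonneg_left left (sub_nonneg.2 hxb)
    _ = (x - a) * (C * (b - x)) := by ring
    _ ≤ (x - a) * (f b - f x - f (b - x)) := mul_le_mul_of_nonneg_left right (sub_nonneg.2 hax)

theorem superquadratic_above_M
    (f : ℝ → ℝ) (hf : Superquadratic f)
    (m M : ℝ) (hm : 0 ≤ m) (hmM : m < M)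
    (s : ℝ) (hs : M ≤ s) :
    (M - s) / (M - m) * f m + (s - m) / (M - m) * f M ≤
      f s - f (s - M) + (M - s) / (M - m) * f (M - m) := by
  have hslopes := hf.mul_sub_le_mul_sub hm hmM.le hs
  have hMm : 0 < M - m := sub_pos.2 hmM
  have hgap : f s - f (s - M) + (M - s) / (M - m) * f (M - m)
      - ((M - s) / (M - m) * f m + (s - m) / (M - m) * f M)
      = ((M - m) * (f s - f M - f (s - M)) - (s - M) * (f M - f m + f (M - m))) / (M - m) := by
    field_simp
    ring
  rw [← sub_nonneg, hgap]
  exact div_nonneg (sub_nonneg.2 hslopes) hMm.le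
end

section
/- Let f : [0,∞) → ℝ be a superquadratic function and let 0 ≤ m < M. Then for every s with 0 ≤ s ≤ m: f(s) − f(m−s) + ((s−m)/(M−m))·f(M−m) ≥ ((M−s)/(M−m))·f(m) + ((s−m)/(M−m))·f(M). -/
theorem superquadratic_below_m
    (f : ℝ → ℝ) (hf : Superquadratic f)
    (m M : ℝ) (hm : 0 ≤ m) (hmM : m < M)
    (s : ℝ) (hs0 : 0 ≤ s) (hsm : s ≤ m) :
    (M - s) / (M - m) * f m + (s - m) / (M - m) * f M ≤
      f s - f (m - s) + (s - m) / (M - m) * f (M - m) := by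
  obtain ⟨C, hC⟩ := hf m hm
  have at_s : f m + C * (s - m) + f (m - s) ≤ f s := by
    simpa [abs_of_nonpos (sub_nonpos.2 hsm)] using hC s hs0
  have at_M : f m + C * (M - m) + f (M - m) ≤ f M := by
    simpa [abs_of_pos (sub_pos.2 hmM)] using hC M (hm.trans hmM.le)
  have hMm : M - m ≠ 0 := (sub_pos.2 hmM).ne'
  set t := (s - m) / (M - m) with ht_def
  have ht : t ≤ 0 := div_nonpos_of_nonpos_of_nonneg (sub_nonpos.2 hsm) (sub_pos.2 hmM).le
  have hweight : (M - s) / (M - m) = 1 - t := by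
    rw [ht_def]; field_simp; ring
  have hslope : C * (s - m) = t * (C * (M - m)) := by
    rw [ht_def]; field_simp
  have scaled := mul_le_mul_of_nonpos_left at_M ht
  -- `at_s` plus `t • at_M`: the slope terms cancel by `hslope`
  rw [hweight]
  linarith
end

section
/- Let f : [0,∞) → ℝ be a superquadratic function, let 0 ≤ m < M, and let β(t) = ((t−m)/(M−m))·f(M−t) + ((M−t)/(M−m))·f(t−m). Then for every t ∈ [m,M]: f(t) + β(t) ≤ ((M−t)/(M−m))·f(m) + ((t−m)/(M−m))·f(M). -/
namespace Superquadratic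

open Finset

variable {f : ℝ → ℝ}

theorem jensen_s18 (hf : Superquadratic f) {ι : Type*} (s : Finset ι)
    (w y : ι → ℝ) (hw : ∀ i ∈ s, 0 ≤ w i) (hw₁ : ∑ i ∈ s, w i = 1) (hy : ∀ i ∈ s, 0 ≤ y i) :
    f (∑ i ∈ s, w i * y i) + ∑ i ∈ s, w i * f |y i - ∑ j ∈ s, w j * y j|
      ≤ ∑ i ∈ s, w i * f (y i) := by
  set x := ∑ i ∈ s, w i * y i
  obtain ⟨C, hC⟩ := hf x (sum_nonneg fun i hi => mul_nonneg (hw i hi) (hy i hi))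
  -- the supporting line at the barycentre `x` averages to zero
  have linear_part : ∑ i ∈ s, w i * (C * (y i - x)) = 0 := by
    simp only [mul_sub, mul_left_comm _ C, ← mul_sum, sum_sub_distrib, ← sum_mul, hw₁]
    ring
  calc f x + ∑ i ∈ s, w i * f |y i - x|
      = ∑ i ∈ s, w i * (f x + C * (y i - x) + f |y i - x|) := by
        simp only [mul_add, sum_add_distrib, ← sum_mul, hw₁, linear_part]
        ring
    _ ≤ ∑ i ∈ s, w i * f (y i) :=
        sum_le_sum fun i hi => mul_le_mul_of_nonneg_left (hC _ (hy i hi)) (hw i hi)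

theorem jensen_two (hf : Superquadratic f) {a b y₁ y₂ : ℝ} (ha : 0 ≤ a) (hb : 0 ≤ b)
    (hab : a + b = 1) (hy₁ : 0 ≤ y₁) (hy₂ : 0 ≤ y₂) :
    f (a * y₁ + b * y₂) + a * f |y₁ - (a * y₁ + b * y₂)| + b * f |y₂ - (a * y₁ + b * y₂)|
      ≤ a * f y₁ + b * f y₂ := by
  simpa [Fin.forall_fin_two, add_assoc, ha, hb, hab, hy₁, hy₂] using
    hf.jensen_s18 univ ![a, b] ![y₁, y₂]

end Superquadratic

theorem superquadratic_jensen_with_beta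
    (f : ℝ → ℝ) (hf : Superquadratic f)
    (m M : ℝ) (hm : 0 ≤ m) (hmM : m < M)
    (β : ℝ → ℝ)
    (hβ : ∀ t ∈ Set.Icc m M,
      β t = (t - m) / (M - m) * f (M - t) + (M - t) / (M - m) * f (t - m))
    (t : ℝ) (ht : t ∈ Set.Icc m M) :
    f t + β t ≤ (M - t) / (M - m) * f m + (t - m) / (M - m) * f M := by
  obtain ⟨htm, htM⟩ := ht
  have hMm : 0 < M - m := sub_pos.mpr hmM
  have barycentre : (M - t) / (M - m) * m + (t - m) / (M - m) * M = t := by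
    field_simp; ring
  have jensen_s18 := hf.jensen_two (div_nonneg (sub_nonneg.2 htM) hMm.le)
    (div_nonneg (sub_nonneg.2 htm) hMm.le) (by field_simp; ring) hm (hm.trans hmM.le)
  rw [barycentre, abs_sub_comm, abs_of_nonneg (sub_nonneg.2 htm),
    abs_of_nonneg (sub_nonneg.2 htM)] at jensen_s18
  rw [hβ t ⟨htm, htM⟩]
  linarith
end
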